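/- arXiv:1310.2784 — 3 statements merged into one kernel-verified Lean document; each statement's English description precedes it below -/
import Mathlib

section
/- Let h : X' → X be a finite dominant morphism of integral schemes, where X is normal (all stalks of its structure sheaf are integrally closed domains). Let K(X) and K(X') denote the function fields of X and X', so that h induces a field extension K(X) ⊆ K(X'). Then for every global section s ∈ Γ(X', O_{X'}), its image in K(X') is algebraic over K(X), and all coefficients of its minimal polynomial over K(X) lie in the image of the canonical injection Γ(X, O_X) → K(X). -/
open AlgebraicGeometry CategoryTheory TopologicalSpace

/-- A dominant morphism `h : X' ⟶ X` of irreducible schemes induces a map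
`K(X) ⟶ K(X')` on function fields, obtained by composing the canonical map
`K(X) = O_{X, η_X} ⟶ O_{X, h(η_{X'})}` (where `η` denotes generic points; this map exists
since `h(η_{X'})` specializes to `η_X`, `h` being dominant) with the stalk map
`O_{X, h(η_{X'})} ⟶ O_{X', η_{X'}} = K(X')` of `h` at the generic point of `X'`. -/
noncomputable def functionFieldMap {X X' : AlgebraicGeometry.Scheme}
    [IrreducibleSpace X] [IrreducibleSpace X'] (h : X' ⟶ X) [IsDominant h] :
    X.functionField ⟶ X'.functionField :=
  X.presheaf.stalkSpecializes
    (specializes_iff_mem_closure.mpr (by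
      have hsub : Set.range h.base ⊆ closure ({h.base (genericPoint X')} : Set X) := by
        rintro _ ⟨x, rfl⟩
        exact (((genericPoint_spec X').specializes trivial).map h.base.hom.continuous).mem_closure
      have hd : Dense (closure ({h.base (genericPoint X')} : Set X)) :=
        h.denseRange.mono hsub
      have huniv := hd.closure_eq
      rw [closure_closure] at huniv
      rw [huniv]
      trivial)) ≫ h.stalkMap (genericPoint X')

/-!
Over an affine open `U ⊆ X` the ring `Γ(X', h⁻¹U)` is finite over `Γ(X, U)`, so the image `t` of
`s` in `K(X')` is integral over `Γ(X, U)`, hence over every stalk `O_{X,x}`. As `O_{X,x}` is an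
integrally closed domain with fraction field `K(X)`, the minimal polynomial of `t` over `K(X)` is
the image of its minimal polynomial over `O_{X,x}`, so its coefficients lie in every stalk. On an
integral scheme sections are determined by their image in `K(X)`, so an element of `K(X)` lying in
every stalk glues to a global section.
-/

lemma minpoly_coeff_mem_range_algebraMap {R K L : Type*} [CommRing R] [IsDomain R]
    [IsIntegrallyClosed R] [Field K] [Algebra R K] [IsFractionRing R K] [CommRing L] [IsDomain L]
    [Algebra K L] [Algebra R L] [IsScalarTower R K L] {t : L} (ht : IsIntegral R t) (n : ℕ) :
    (minpoly K t).coeff n ∈ Set.range (algebraMap R K) := by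
  rw [minpoly.isIntegrallyClosed_eq_field_fractions' K ht, Polynomial.coeff_map]
  exact Set.mem_range_self _

namespace AlgebraicGeometry

variable {X X' : Scheme}

lemma genericPoint_eq_of_isDominant [IrreducibleSpace X] [IrreducibleSpace X'] (h : X' ⟶ X)
    [IsDominant h] : h.base (genericPoint X') = genericPoint X := by
  refine ((genericPoint_spec X).eq ?_).symm
  have := (genericPoint_spec X').image h.base.hom.continuous
  rwa [Set.image_univ, h.denseRange.closure_range] at this

lemma functionFieldMap_germ [IrreducibleSpace X] [IrreducibleSpace X'] (h : X' ⟶ X)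
    [IsDominant h] (U : X.Opens) (hη : genericPoint X ∈ U) (hη' : genericPoint X' ∈ h ⁻¹ᵁ U)
    (a : Γ(X, U)) :
    functionFieldMap h (X.presheaf.germ U (genericPoint X) hη a) =
      X'.presheaf.germ (h ⁻¹ᵁ U) (genericPoint X') hη' (h.app U a) := by
  rw [functionFieldMap, CommRingCat.comp_apply, TopCat.Presheaf.germ_stalkSpecializes_apply,
    Scheme.Hom.germ_stalkMap_apply]

lemma isIntegralElem_germ_of_isFinite [IrreducibleSpace X] [IrreducibleSpace X'] (h : X' ⟶ X)
    [IsFinite h] [IsDominant h] {U : X.Opens} (hU : IsAffineOpen U) (hη : genericPoint X ∈ U)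
    (hη' : genericPoint X' ∈ h ⁻¹ᵁ U) (b : Γ(X', h ⁻¹ᵁ U)) :
    ((functionFieldMap h).hom.comp (X.presheaf.germ U (genericPoint X) hη).hom).IsIntegralElem
      (X'.presheaf.germ (h ⁻¹ᵁ U) (genericPoint X') hη' b) := by
  have hcomp : (functionFieldMap h).hom.comp (X.presheaf.germ U (genericPoint X) hη).hom =
      (X'.presheaf.germ (h ⁻¹ᵁ U) (genericPoint X') hη').hom.comp (h.app U).hom :=
    RingHom.ext (functionFieldMap_germ h U hη hη')
  rw [hcomp]
  exact ((IsFinite.finite_app h U hU).to_isIntegral b).map _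

lemma isIntegralElem_germToFunctionField_of_isFinite [IrreducibleSpace X] [IrreducibleSpace X']
    (h : X' ⟶ X) [IsFinite h] [IsDominant h] [Nonempty (⊤ : X'.Opens)] (x : X) (s : Γ(X', ⊤)) :
    ((functionFieldMap h).hom.comp
      (algebraMap (X.presheaf.stalk x) X.functionField)).IsIntegralElem
        (X'.germToFunctionField ⊤ s) := by
  obtain ⟨_, ⟨U, hU, rfl⟩, hxU, -⟩ :=
    X.isBasis_affineOpens.exists_subset_of_mem_open (Set.mem_univ x) isOpen_univ
  have hη : genericPoint X ∈ U := (genericPoint_specializes x).mem_open U.isOpen hxU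
  have hη' : genericPoint X' ∈ h ⁻¹ᵁ U := by
    rwa [Scheme.Hom.mem_preimage, genericPoint_eq_of_isDominant]
  have hs : X'.germToFunctionField ⊤ s = X'.presheaf.germ (h ⁻¹ᵁ U) (genericPoint X') hη'
      (X'.presheaf.map (homOfLE le_top).op s) :=
    (TopCat.Presheaf.germ_res_apply _ _ _ _ _).symm
  have hgerm : (algebraMap (X.presheaf.stalk x) X.functionField).comp
      (X.presheaf.germ U x hxU).hom = (X.presheaf.germ U (genericPoint X) hη).hom := by
    rw [RingHom.algebraMap_toAlgebra, ← CommRingCat.hom_comp,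
      TopCat.Presheaf.germ_stalkSpecializes]
  rw [hs]
  refine RingHom.IsIntegralElem.of_comp (f := (X.presheaf.germ U x hxU).hom) ?_
  rw [RingHom.comp_assoc, hgerm]
  exact isIntegralElem_germ_of_isFinite h hU hη hη' _

lemma mem_range_germToFunctionField_top_of_mem_range_stalk [IsIntegral X] [Nonempty (⊤ : X.Opens)]
    (c : X.functionField)
    (hc : ∀ x : X, c ∈ Set.range (algebraMap (X.presheaf.stalk x) X.functionField)) :
    c ∈ Set.range (X.germToFunctionField ⊤) := by
  choose r hr using hc
  choose V hxV a ha using fun x => X.presheaf.exists_germ_eq (r x)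
  have hη (x : X) : genericPoint X ∈ V x :=
    (genericPoint_specializes x).mem_open (V x).isOpen (hxV x)
  have hca (x : X) : X.presheaf.germ (V x) (genericPoint X) (hη x) (a x) = c := by
    have : Nonempty (V x) := ⟨⟨x, hxV x⟩⟩
    rw [← Scheme.algebraMap_germ_eq_germToFunctionField (X := X) (hxV x), ha, hr]
  have hcompat : TopCat.Presheaf.IsCompatible X.presheaf V a := fun x y => by
    have hxy : genericPoint X ∈ V x ⊓ V y := ⟨hη x, hη y⟩
    apply germ_injective_of_isIntegral X (genericPoint X) hxy
    rw [TopCat.Presheaf.germ_res_apply, TopCat.Presheaf.germ_res_apply, hca, hca]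
  obtain ⟨gl, hgl, -⟩ : ∃! gl : Γ(X, ⊤),
      ∀ x, X.presheaf.map (homOfLE le_top : V x ⟶ ⊤).op gl = a x :=
    X.sheaf.existsUnique_gluing' V ⊤ (fun _ => homOfLE le_top)
      (fun x _ => Opens.mem_iSup.mpr ⟨x, hxV x⟩) a hcompat
  refine ⟨gl, ?_⟩
  rw [← hca (genericPoint X), ← hgl, TopCat.Presheaf.germ_res_apply]

end AlgebraicGeometry

/-- Let `h : X' ⟶ X` be a finite dominant morphism of integral schemes, with `X` normal
(all stalks of `O_X` are integrally closed domains).  Then for every global section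
`s ∈ Γ(X', O_{X'})`, its image in the function field `K(X')` is algebraic over `K(X)`,
and every coefficient of its minimal polynomial over `K(X)` lies in the image of the
canonical injection `Γ(X, O_X) → K(X)`. -/
theorem minpoly_coeff_mem_global_sections_of_finite_dominant
    {X X' : AlgebraicGeometry.Scheme} [IsIntegral X] [IsIntegral X']
    (hnormal : ∀ x : X, IsIntegrallyClosed (X.presheaf.stalk x))
    (h : X' ⟶ X) [IsFinite h] [IsDominant h]
    (s : Γ(X', ⊤)) :
    haveI : Nonempty (⊤ : X.Opens) := ⟨⟨genericPoint X, trivial⟩⟩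
    haveI : Nonempty (⊤ : X'.Opens) := ⟨⟨genericPoint X', trivial⟩⟩
    letI : Algebra X.functionField X'.functionField := RingHom.toAlgebra (functionFieldMap h).hom
    IsAlgebraic X.functionField (X'.germToFunctionField ⊤ s) ∧
      ∀ n : ℕ, (minpoly X.functionField (X'.germToFunctionField ⊤ s)).coeff n ∈
        Set.range (X.germToFunctionField ⊤) := by
  have : Nonempty (⊤ : X.Opens) := ⟨⟨genericPoint X, trivial⟩⟩
  have : Nonempty (⊤ : X'.Opens) := ⟨⟨genericPoint X', trivial⟩⟩
  let : Algebra X.functionField X'.functionField := (functionFieldMap h).hom.toAlgebra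
  have hint := (isIntegralElem_germToFunctionField_of_isFinite h · s)
  refine ⟨?_, fun n => mem_range_germToFunctionField_top_of_mem_range_stalk _ fun x => ?_⟩
  · exact IsIntegral.isAlgebraic (hint (genericPoint X)).of_comp
  · let : Algebra (X.presheaf.stalk x) X'.functionField :=
      ((functionFieldMap h).hom.comp (algebraMap _ _)).toAlgebra
    have : IsScalarTower (X.presheaf.stalk x) X.functionField X'.functionField :=
      .of_algebraMap_eq' rfl
    have := hnormal x
    exact minpoly_coeff_mem_range_algebraMap (hint x) n
end

section
/- Let k be an algebraically closed field, let X be an integral normal scheme over k whose ring of global sections consists only of constants (i.e., the structure map k → Γ(X, O_X) is bijective), and let h : X' → X be a finite dominant morphism with X' integral. Then the ring of global sections of X' also consists only of constants: the canonical map k → Γ(X', O_{X'}) is bijective. -/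
/-!
The germ `s'` at the generic point of a global section of `X'` is integral over every stalk
`O_{X,x}`, because `h` is finite. These stalks are integrally closed with fraction field `K(X)`,
so the coefficients of the minimal polynomial of `s'` over `K(X)` lie in every `O_{X,x}`: they are
global sections of `X`, i.e. constants. Hence `s'` is integral over the algebraically closed
field `k`, so it is a constant.
-/

open AlgebraicGeometry CategoryTheory TopologicalSpace Polynomial

/-- The ring homomorphism `k → Γ(X, O_X)` induced by a structure morphism
`g : X ⟶ Spec k`. -/
noncomputable def structureMapGamma {k : Type*} [CommRing k] {X : AlgebraicGeometry.Scheme}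
    (g : X ⟶ AlgebraicGeometry.Spec (CommRingCat.of k)) : k →+* Γ(X, ⊤) :=
  ((AlgebraicGeometry.Scheme.ΓSpecIso (CommRingCat.of k)).inv ≫ g.appTop).hom

lemma structureMapGamma_comp {k : Type*} [CommRing k] {X Y : Scheme} (f : X ⟶ Y)
    (g : Y ⟶ Spec (CommRingCat.of k)) :
    structureMapGamma (f ≫ g) = f.appTop.hom.comp (structureMapGamma g) := by
  rw [structureMapGamma, structureMapGamma, Scheme.Hom.comp_appTop]
  rfl

theorem IsAlgClosed.mem_range_of_isIntegralElem {k L : Type*} [Field k] [IsAlgClosed k]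
    [CommRing L] [IsDomain L] (f : k →+* L) {x : L} (hx : f.IsIntegralElem x) :
    x ∈ Set.range f :=
  letI := f.toAlgebra
  minpoly.mem_range_of_degree_eq_one k x
    (IsAlgClosed.degree_eq_one_of_irreducible k (minpoly.irreducible hx))

theorem isIntegralElem_comp_of_minpoly_coeff_mem_range {k K L : Type*} [CommRing k] [Field K]
    [CommRing L] [Algebra K L] (ψ : k →+* K) {s : L} (hs : IsIntegral K s)
    (hcoeff : ∀ n, (minpoly K s).coeff n ∈ Set.range ψ) :
    ((algebraMap K L).comp ψ).IsIntegralElem s := by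
  obtain ⟨q, hq, -, hmonic⟩ :=
    lifts_and_degree_eq_and_monic ((lifts_iff_coeff_lifts _).mpr hcoeff) (minpoly.monic hs)
  exact ⟨q, hmonic, by rw [← eval₂_map, hq, ← aeval_def, minpoly.aeval]⟩

theorem minpoly.coeff_mem_range_of_isIntegrallyClosed {R K L : Type*} [CommRing R] [IsDomain R]
    [IsIntegrallyClosed R] [Field K] [Algebra R K] [IsFractionRing R K] [CommRing L] [IsDomain L]
    [Algebra K L] {s : L} (hs : ((algebraMap K L).comp (algebraMap R K)).IsIntegralElem s)
    (n : ℕ) : (minpoly K s).coeff n ∈ Set.range (algebraMap R K) := by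
  let : Algebra R L := ((algebraMap K L).comp (algebraMap R K)).toAlgebra
  have : IsScalarTower R K L := .of_algebraMap_eq' rfl
  rw [minpoly.isIntegrallyClosed_eq_field_fractions' K hs, coeff_map]
  exact Set.mem_range_self _

namespace AlgebraicGeometry

lemma Scheme.Hom.genericPoint_eq_of_isDominant {X Y : Scheme} [IrreducibleSpace X]
    [IrreducibleSpace Y] (f : X ⟶ Y) [IsDominant f] :
    f (genericPoint X) = genericPoint Y := by
  refine ((genericPoint_spec Y).eq ?_).symm
  simpa [f.denseRange.closure_range] using (genericPoint_spec X).image f.continuous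

theorem Scheme.eq_of_germ_genericPoint_eq (X : Scheme) [IsIntegral X] {U : X.Opens}
    {s t : Γ(X, U)}
    (h : ∀ hU : genericPoint X ∈ U, X.presheaf.germ U _ hU s = X.presheaf.germ U _ hU t) :
    s = t := by
  by_cases hU : genericPoint X ∈ U
  · exact germ_injective_of_isIntegral X _ hU (h hU)
  · obtain rfl : U = ⊥ := by
      rw [← Opens.not_nonempty_iff_eq_bot]
      exact fun hne ↦ hU (((genericPoint_spec X).mem_open_set_iff U.isOpen).mpr (by simpa))
    exact Subsingleton.elim s t

theorem Scheme.exists_germ_top_eq_of_forall_mem_range_stalk (X : Scheme) [IsIntegral X]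
    (c : X.functionField)
    (hc : ∀ x : X, c ∈ Set.range (algebraMap (X.presheaf.stalk x) X.functionField)) :
    ∃ t : Γ(X, ⊤), X.presheaf.germ ⊤ (genericPoint X) trivial t = c := by
  have hlocal : ∀ x : X, ∃ (W : X.Opens) (hxW : x ∈ W) (t : Γ(X, W)),
      X.presheaf.germ W (genericPoint X) ((genericPoint_specializes x).mem_open W.isOpen hxW) t
        = c := by
    intro x
    obtain ⟨d, rfl⟩ := hc x
    obtain ⟨W, hxW, t, rfl⟩ := X.presheaf.exists_germ_eq d
    exact ⟨W, hxW, t, (X.presheaf.germ_stalkSpecializes_apply _ _ _).symm⟩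
  choose W hxW t ht using hlocal
  have hcompat : TopCat.Presheaf.IsCompatible X.sheaf.1 W t := fun i j ↦
    X.eq_of_germ_genericPoint_eq fun _ ↦ by
      change X.presheaf.germ _ _ _ (X.presheaf.map _ (t i)) =
        X.presheaf.germ _ _ _ (X.presheaf.map _ (t j))
      rw [TopCat.Presheaf.germ_res_apply, TopCat.Presheaf.germ_res_apply, ht, ht]
  obtain ⟨s, hs, -⟩ := X.sheaf.existsUnique_gluing' W ⊤ (fun i ↦ homOfLE le_top)
    (fun x _ ↦ Opens.mem_iSup.mpr ⟨x, hxW x⟩) t hcompat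
  refine ⟨s, ?_⟩
  rw [← ht (genericPoint X), ← hs (genericPoint X)]
  exact (X.presheaf.germ_res_apply _ _ _ s).symm

lemma Scheme.Hom.genericPoint_mem_preimage {X Y : Scheme} [IrreducibleSpace X]
    [IrreducibleSpace Y] (f : X ⟶ Y) [IsDominant f] {U : Y.Opens} (hU : genericPoint Y ∈ U) :
    genericPoint X ∈ f ⁻¹ᵁ U :=
  show f (genericPoint X) ∈ U from f.genericPoint_eq_of_isDominant ▸ hU

noncomputable def Scheme.Hom.functionFieldMap {X Y : Scheme} [IrreducibleSpace X]
    [IrreducibleSpace Y] (f : X ⟶ Y) [IsDominant f] : Y.functionField ⟶ X.functionField :=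
  Y.presheaf.stalkSpecializes (Inseparable.of_eq f.genericPoint_eq_of_isDominant).specializes ≫
    f.stalkMap (genericPoint X)

lemma Scheme.Hom.functionFieldMap_germ {X Y : Scheme} [IrreducibleSpace X] [IrreducibleSpace Y]
    (f : X ⟶ Y) [IsDominant f] (U : Y.Opens) (hU : genericPoint Y ∈ U) (u : Γ(Y, U)) :
    f.functionFieldMap (Y.presheaf.germ U _ hU u) =
      X.presheaf.germ (f ⁻¹ᵁ U) (genericPoint X) (f.genericPoint_mem_preimage hU)
        (f.app U u) := by
  rw [functionFieldMap, CommRingCat.comp_apply, TopCat.Presheaf.germ_stalkSpecializes_apply]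
  exact f.germ_stalkMap_apply U _ _ u

theorem Scheme.Hom.isIntegralElem_germ_top_of_isFinite {X Y : Scheme} [IrreducibleSpace X]
    [IrreducibleSpace Y] (f : X ⟶ Y) [IsFinite f] [IsDominant f] (y : Y) (s : Γ(X, ⊤)) :
    (f.functionFieldMap.hom.comp (algebraMap (Y.presheaf.stalk y) Y.functionField)).IsIntegralElem
      (X.presheaf.germ ⊤ (genericPoint X) trivial s) := by
  obtain ⟨U, hU, hyU, -⟩ := exists_isAffineOpen_mem_and_subset (Opens.mem_top y)
  have hgU : genericPoint Y ∈ U := (genericPoint_specializes y).mem_open U.isOpen hyU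
  have hgX := f.genericPoint_mem_preimage hgU
  have hsU := ((f.finite_app U hU).to_isIntegral (X.presheaf.map (homOfLE le_top).op s)).map
    (X.presheaf.germ (f ⁻¹ᵁ U) (genericPoint X) hgX).hom
  have hcomm : (X.presheaf.germ (f ⁻¹ᵁ U) (genericPoint X) hgX).hom.comp (f.app U).hom =
      (f.functionFieldMap.hom.comp (algebraMap (Y.presheaf.stalk y) Y.functionField)).comp
        (Y.presheaf.germ U y hyU).hom := by
    ext u
    simp only [RingHom.comp_apply, RingHom.algebraMap_toAlgebra,
      TopCat.Presheaf.germ_stalkSpecializes_apply, functionFieldMap_germ]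
  rw [hcomm, TopCat.Presheaf.germ_res_apply] at hsU
  exact hsU.of_comp

end AlgebraicGeometry

/-- Let `k` be an algebraically closed field, `X` an integral normal scheme over `k`
(normal: every stalk of the structure sheaf is an integrally closed domain) with only
constant global sections (the structure map `k → Γ(X, O_X)` is bijective), and let
`h : X' ⟶ X` be a finite dominant morphism with `X'` integral.  Then `X'` also has only
constant global sections: the map `k → Γ(X', O_{X'})` is bijective. -/
theorem global_sections_constant_of_finite_dominant
    {k : Type*} [Field k] [IsAlgClosed k]
    {X X' : AlgebraicGeometry.Scheme} [IsIntegral X] [IsIntegral X']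
    (hnormal : ∀ x : X, IsIntegrallyClosed (X.presheaf.stalk x))
    (g : X ⟶ AlgebraicGeometry.Spec (CommRingCat.of k))
    (hX : Function.Bijective (structureMapGamma g))
    (h : X' ⟶ X) [IsFinite h] [IsDominant h] :
    Function.Bijective (structureMapGamma (h ≫ g)) := by
  refine ⟨(structureMapGamma (h ≫ g)).injective, fun s ↦ ?_⟩
  let ψ : k →+* X.functionField :=
    (X.presheaf.germ ⊤ (genericPoint X) trivial).hom.comp (structureMapGamma g)
  let : Algebra X.functionField X'.functionField := h.functionFieldMap.hom.toAlgebra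
  set s' := X'.presheaf.germ ⊤ (genericPoint X') trivial s
  have hs' := (h.isIntegralElem_germ_top_of_isFinite · s)
  have hcoeff : ∀ n, (minpoly X.functionField s').coeff n ∈ Set.range ψ := fun n ↦ by
    obtain ⟨t, ht⟩ := X.exists_germ_top_eq_of_forall_mem_range_stalk _ fun x ↦
      have := hnormal x
      minpoly.coeff_mem_range_of_isIntegrallyClosed (hs' x) n
    obtain ⟨a, rfl⟩ := hX.2 t
    exact ⟨a, ht⟩
  obtain ⟨a, ha⟩ := IsAlgClosed.mem_range_of_isIntegralElem _
    (isIntegralElem_comp_of_minpoly_coeff_mem_range ψ (hs' (genericPoint X)).of_comp hcoeff)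
  refine ⟨a, germ_injective_of_isIntegral X' (genericPoint X') (U := ⊤) trivial ?_⟩
  rw [← ha, structureMapGamma_comp]
  exact (h.functionFieldMap_germ ⊤ trivial _).symm
end

section
/- Let k be a field of characteristic p > 0 and let k[X] be the polynomial ring in one variable over k. Consider the additive group homomorphism ℘ : k[X] → k[X] given by ℘(f) = f^p − f. Then the quotient additive group k[X]/℘(k[X]) is infinite. -/
/-!
Every value `f ^ p - f` of the Artin–Schreier map has degree divisible by `p`: it is a constant
when `f` is, and otherwise its degree is that of `f ^ p`. The monomials `X ^ (p * n + 1)` are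
therefore pairwise incongruent modulo its image, since `X ^ (p * b + 1) - X ^ (p * a + 1)` has
degree `p * b + 1` for `a < b`.
-/

/-- The Artin–Schreier map `℘ : k[X] → k[X]`, `f ↦ f ^ p - f`, as a homomorphism of
additive groups (it is additive since Frobenius is additive in characteristic `p`). -/
noncomputable def artinSchreierMap (k : Type*) [Field k] (p : ℕ) [Fact (Nat.Prime p)]
    [CharP k p] : Polynomial k →+ Polynomial k :=
  AddMonoidHom.mk' (fun f => f ^ p - f) (by
    intro f g
    have : ExpChar (Polynomial k) p := by
      have : CharP (Polynomial k) p := inferInstance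
      exact ExpChar.prime (Fact.out)
    show (f + g) ^ p - (f + g) = (f ^ p - f) + (g ^ p - g)
    rw [add_pow_char]
    ring)

open Polynomial

theorem Polynomial.dvd_natDegree_pow_sub_self {R : Type*} [Ring R] [NoZeroDivisors R] {n : ℕ}
    (hn : 1 < n) (f : R[X]) : n ∣ (f ^ n - f).natDegree := by
  rcases Nat.eq_zero_or_pos f.natDegree with hf | hf
  · rw [eq_C_of_natDegree_eq_zero hf, ← C_pow, ← C_sub, natDegree_C]
    exact dvd_zero n
  · have hlt : f.natDegree < (f ^ n).natDegree := by
      rw [natDegree_pow]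
      exact lt_mul_left hf hn
    rw [natDegree_sub_eq_left_of_natDegree_lt hlt, natDegree_pow]
    exact dvd_mul_right n _

theorem dvd_natDegree_of_mem_range_artinSchreierMap {k : Type*} [Field k] {p : ℕ}
    [Fact (Nat.Prime p)] [CharP k p] {g : k[X]} (hg : g ∈ (artinSchreierMap k p).range) :
    p ∣ g.natDegree := by
  obtain ⟨f, rfl⟩ := hg
  exact dvd_natDegree_pow_sub_self (Fact.out : p.Prime).one_lt f

theorem Polynomial.natDegree_X_pow_sub_X_pow {R : Type*} [Ring R] [Nontrivial R] {m n : ℕ}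
    (h : m < n) : ((X : R[X]) ^ n - X ^ m).natDegree = n := by
  rw [natDegree_sub_eq_left_of_natDegree_lt] <;> simp [h]

/-- Let `k` be a field of characteristic `p > 0`. Then the quotient additive group
`k[X] / ℘(k[X])`, where `℘(f) = f ^ p - f` is the Artin–Schreier map, is infinite. -/
theorem infinite_artinSchreier_quotient (k : Type*) [Field k] (p : ℕ) [Fact (Nat.Prime p)]
    [CharP k p] :
    Infinite (Polynomial k ⧸ (artinSchreierMap k p).range) := by
  have hp : p.Prime := Fact.out
  refine Infinite.of_injective
    (fun n : ℕ ↦ (QuotientAddGroup.mk (X ^ (p * n + 1)) : k[X] ⧸ (artinSchreierMap k p).range))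
    (Function.Injective.of_lt_imp_ne fun a b hab heq ↦ ?_)
  have hmem := dvd_natDegree_of_mem_range_artinSchreierMap (QuotientAddGroup.eq.mp heq)
  rw [neg_add_eq_sub, natDegree_X_pow_sub_X_pow (by gcongr; exact hp.pos)] at hmem
  exact hp.not_dvd_one ((Nat.dvd_add_right (dvd_mul_right p b)).mp hmem)
end
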